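/- For every r ∈ (0,1) one has r²/(1−r) + r + 2 + (2/r)log(1−r) ≥ 0. -/

import Mathlib

theorem stmt7 : ∀ r : ℝ, 0 < r → r < 1 →
    0 ≤ r ^ 2 / (1 - r) + r + 2 + (2 / r) * Real.log (1 - r) := by
  intro r hr hr1
  have h1r : (0:ℝ) < 1 - r := by linarith
  set F : ℝ → ℝ := fun x => Real.log (1 - x) + x + x ^ 2 / 2 + x ^ 3 / (2 * (1 - x)) with hFdef
  have hd : ∀ x ∈ Set.Icc (0:ℝ) r, HasDerivAt F (x ^ 2 / (2 * (1 - x) ^ 2)) x := by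
    intro x hx
    have hx1 : x < 1 := lt_of_le_of_lt hx.2 hr1
    have h1x : (0:ℝ) < 1 - x := by linarith
    have hlog : HasDerivAt (fun y : ℝ => Real.log (1 - y)) ((1 - x)⁻¹ * (-1)) x := by
      have := (Real.hasDerivAt_log (ne_of_gt h1x)).comp x
        (((hasDerivAt_id x).const_sub 1))
      exact this
    have hden : HasDerivAt (fun y : ℝ => 2 * (1 - y)) (2 * (-1)) x :=
      ((hasDerivAt_id x).const_sub 1).const_mul 2
    have hdiv : HasDerivAt (fun y : ℝ => y ^ 3 / (2 * (1 - y)))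
        ((3 * x ^ 2 * (2 * (1 - x)) - x ^ 3 * (2 * (-1))) / (2 * (1 - x)) ^ 2) x := by
      have h3 : HasDerivAt (fun y : ℝ => y ^ 3) (3 * x ^ 2) x := by
        simpa using hasDerivAt_pow 3 x
      exact h3.div hden (by positivity)
    have hsq : HasDerivAt (fun y : ℝ => y ^ 2 / 2) (x) x := by
      have h2 : HasDerivAt (fun y : ℝ => y ^ 2) (2 * x) x := by
        simpa using hasDerivAt_pow 2 x
      simpa using h2.div_const 2
    have := ((hlog.add (hasDerivAt_id x)).add hsq).add hdiv
    refine this.congr_deriv ?_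
    field_simp
    ring
  have hmono : MonotoneOn F (Set.Icc (0:ℝ) r) := by
    apply monotoneOn_of_deriv_nonneg (convex_Icc 0 r)
    · exact fun x hx => (hd x hx).continuousAt.continuousWithinAt
    · intro x hx
      rw [interior_Icc] at hx
      exact (hd x (Set.mem_Icc_of_Ioo hx)).differentiableAt.differentiableWithinAt
    · intro x hx
      rw [interior_Icc] at hx
      rw [(hd x (Set.mem_Icc_of_Ioo hx)).deriv]
      positivity
  have hF0 : F 0 = 0 := by simp [hFdef]
  have key : 0 ≤ F r := by
    have := hmono (Set.left_mem_Icc.mpr hr.le) (Set.right_mem_Icc.mpr hr.le) hr.le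
    rw [hF0] at this
    exact this
  have key' : 0 ≤ 2 * (1 - r) * Real.log (1 - r) + 2 * r - r ^ 2 := by
    have e : F r = (2 * (1 - r) * Real.log (1 - r) + 2 * r - r ^ 2) / (2 * (1 - r)) := by
      simp only [hFdef]
      field_simp
      ring
    rw [e, le_div_iff₀ (by positivity)] at key
    linarith [key]
  have eg : r ^ 2 / (1 - r) + r + 2 + (2 / r) * Real.log (1 - r) =
      (2 * (1 - r) * Real.log (1 - r) + 2 * r - r ^ 2) / (r * (1 - r)) := by
    field_simp
    ring
  rw [eg]
  exact div_nonneg key' (by positivity)
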